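/- Suppose $\{A_n\}_n$ is a sequence of matrices $A_n \in \mathbb{C}^{d_n\times d_n}$ distributed in the singular value sense as a measurable matrix-valued function $F$, and suppose $\{A_n - B_n\}_n$ is zero-distributed with $\|A_n\|, \|B_n\|$ uniformly bounded. Then $\{B_n\}_n$ is also distributed as $F$ in the singular value sense: for every continuous compactly supported $G$, $\frac{1}{d_n}\sum_j G(\sigma_j(B_n))$ has the same limit as $\frac{1}{d_n}\sum_j G(\sigma_j(A_n))$. -/

import Mathlib

open Filter Finset Matrix Topology MeasureTheory

/-- The (unsorted) singular values of a complex matrix: square roots of the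
eigenvalues of `Aᴴ * A`. -/
noncomputable def svals {m n : Type*} [Fintype m] [Fintype n] [DecidableEq n]
    (A : Matrix m n ℂ) (i : n) : ℝ :=
  Real.sqrt ((Matrix.isHermitian_conjTranspose_mul_self A).eigenvalues i)

/-- Singular values of a `Fin p × Fin q`-indexed complex matrix, arranged in
non-increasing order and indexed by `ℕ` (zero for indices `≥ q`); so
`svalFun A 0` is the largest singular value `σ₁(A)`. -/
noncomputable def svalFun {p q : ℕ} (A : Matrix (Fin p) (Fin q) ℂ) (j : ℕ) : ℝ :=
  if h : j < q then svals A (Tuple.sort (svals A) ((⟨j, h⟩ : Fin q).rev)) else 0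

/-- The spectral norm of a complex matrix: its largest singular value. -/
noncomputable def specNorm {m n : Type*} [Fintype m] [Fintype n] [DecidableEq n]
    (A : Matrix m n ℂ) : ℝ :=
  ⨆ i, svals A i

open scoped Matrix.Norms.L2Operator BigOperators

/-! With `P = AᴴA`, `Q = BᴴB` and `c` a common bound of the spectral norms, the eigenvalues of
`P` and `Q` are the squared singular values and lie in `[0, c²]`. The difference of normalized
moments `𝔼ᵢ λᵢ(Q)^k - 𝔼ᵢ λᵢ(P)^k` is the normalized trace of `Q^k - P^k`, hence at most
`2k c^(2k-1)` times the normalized Frobenius norm `‖A - B‖_F / √d = (𝔼ᵢ σᵢ(A - B)²)^(1/2)`, which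
tends to `0` by testing the zero-distribution of `{Aₙ - Bₙ}` against a compactly supported
function equal to `x²` on the range of the singular values. Weierstrass approximation of
`t ↦ G(√t)` on `[0, c²]` turns vanishing moment differences into
`𝔼ᵢ G(σᵢ(Bₙ)) - 𝔼ᵢ G(σᵢ(Aₙ)) → 0`. -/

lemma exists_hasCompactSupport_eqOn {X F : Type*} [TopologicalSpace X] [RegularSpace X]
    [LocallyCompactSpace X] [NormedAddCommGroup F] [NormedSpace ℝ F] {f : X → F}
    (hf : Continuous f) {s : Set X} (hs : IsCompact s) :
    ∃ g : X → F, Continuous g ∧ HasCompactSupport g ∧ Set.EqOn g f s := by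
  obtain ⟨φ, hφs, -, hφc, -⟩ :=
    exists_continuous_one_zero_of_isCompact hs isClosed_empty (Set.disjoint_empty s)
  refine ⟨fun x => φ x • f x, φ.continuous.smul hf, hφc.smul_right, fun x hx => ?_⟩
  simp [hφs hx]

lemma abs_expect_le_of_forall_abs_le {α : Type*} [Fintype α] {f : α → ℝ} {δ : ℝ} (hδ : 0 ≤ δ)
    (hf : ∀ i, |f i| ≤ δ) : |𝔼 i, f i| ≤ δ := by
  cases isEmpty_or_nonempty α
  · simpa using hδ
  · exact (abs_expect_le _ _).trans (expect_le univ_nonempty fun i _ => hf i)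

section EmpiricalMeans

variable {ι : ℕ → Type*} [∀ n, Fintype (ι n)] {u v : (n : ℕ) → ι n → ℝ}

theorem tendsto_expect_eval_sub_of_tendsto_moments
    (hmom : ∀ k : ℕ, Tendsto (fun n => 𝔼 i, u n i ^ k - 𝔼 i, v n i ^ k) atTop (𝓝 0))
    (p : Polynomial ℝ) :
    Tendsto (fun n => 𝔼 i, p.eval (u n i) - 𝔼 i, p.eval (v n i)) atTop (𝓝 0) := by
  induction p using Polynomial.induction_on' with
  | add p q hp hq => simpa [expect_add_distrib, add_sub_add_comm] using hp.add hq
  | monomial k a => simpa [← mul_expect, ← mul_sub] using (hmom k).const_mul a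

theorem tendsto_expect_sub_of_tendsto_moments_real {a b : ℝ} (hu : ∀ n i, u n i ∈ Set.Icc a b)
    (hv : ∀ n i, v n i ∈ Set.Icc a b)
    (hmom : ∀ k : ℕ, Tendsto (fun n => 𝔼 i, u n i ^ k - 𝔼 i, v n i ^ k) atTop (𝓝 0))
    {g : ℝ → ℝ} (hg : ContinuousOn g (Set.Icc a b)) :
    Tendsto (fun n => 𝔼 i, g (u n i) - 𝔼 i, g (v n i)) atTop (𝓝 0) := by
  refine Metric.tendsto_nhds.2 fun ε hε => ?_
  obtain ⟨p, hp⟩ := exists_polynomial_near_of_continuousOn a b g hg (ε / 3) (by positivity)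
  have happrox : ∀ w : (n : ℕ) → ι n → ℝ, (∀ n i, w n i ∈ Set.Icc a b) →
      ∀ n, |𝔼 i, p.eval (w n i) - 𝔼 i, g (w n i)| ≤ ε / 3 := fun w hw n => by
    rw [← expect_sub_distrib]
    exact abs_expect_le_of_forall_abs_le (by positivity) fun i => (hp _ (hw n i)).le
  filter_upwards [Metric.tendsto_nhds.1 (tendsto_expect_eval_sub_of_tendsto_moments hmom p)
    (ε / 3) (by positivity)] with n hn
  have hu' := abs_le.1 (happrox u hu n)
  have hv' := abs_le.1 (happrox v hv n)
  rw [Real.dist_eq, sub_zero, abs_lt] at hn ⊢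
  constructor <;> linarith

theorem tendsto_expect_sub_of_tendsto_moments {a b : ℝ} (hu : ∀ n i, u n i ∈ Set.Icc a b)
    (hv : ∀ n i, v n i ∈ Set.Icc a b)
    (hmom : ∀ k : ℕ, Tendsto (fun n => 𝔼 i, u n i ^ k - 𝔼 i, v n i ^ k) atTop (𝓝 0))
    {G : ℝ → ℂ} (hG : ContinuousOn G (Set.Icc a b)) :
    Tendsto (fun n => 𝔼 i, G (u n i) - 𝔼 i, G (v n i)) atTop (𝓝 0) := by
  have hre : Tendsto (fun n => (𝔼 i, G (u n i) - 𝔼 i, G (v n i)).re) atTop (𝓝 0) := by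
    simpa [Complex.re_expect] using tendsto_expect_sub_of_tendsto_moments_real hu hv hmom
      (Complex.continuous_re.comp_continuousOn hG)
  have him : Tendsto (fun n => (𝔼 i, G (u n i) - 𝔼 i, G (v n i)).im) atTop (𝓝 0) := by
    simpa [Complex.im_expect] using tendsto_expect_sub_of_tendsto_moments_real hu hv hmom
      (Complex.continuous_im.comp_continuousOn hG)
  have h := ((Complex.continuous_ofReal.tendsto 0).comp hre).add
    (((Complex.continuous_ofReal.tendsto 0).comp him).mul_const Complex.I)
  simpa only [Function.comp_def, Complex.re_add_im, Complex.ofReal_zero, zero_mul, add_zero]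
    using h

theorem tendsto_expect_of_tendsto_expect_hasCompactSupport {K : ℝ} (hu : ∀ n i, |u n i| ≤ K)
    (hz : ∀ G : ℝ → ℂ, Continuous G → HasCompactSupport G →
      Tendsto (fun n => 𝔼 i, G (u n i)) atTop (𝓝 (G 0)))
    {f : ℝ → ℂ} (hf : Continuous f) : Tendsto (fun n => 𝔼 i, f (u n i)) atTop (𝓝 (f 0)) := by
  obtain ⟨g, hg, hgc, hgf⟩ := exists_hasCompactSupport_eqOn hf (isCompact_closedBall 0 |K|)
  have hball : ∀ n i, u n i ∈ Metric.closedBall 0 |K| := fun n i => by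
    simpa using (hu n i).trans (le_abs_self K)
  rw [← hgf (Metric.mem_closedBall_self (abs_nonneg K))]
  refine (hz g hg hgc).congr fun n => ?_
  exact expect_congr rfl fun i _ => hgf (hball n i)

theorem tendsto_expect_sq_of_tendsto_expect_hasCompactSupport {K : ℝ} (hu : ∀ n i, |u n i| ≤ K)
    (hz : ∀ G : ℝ → ℂ, Continuous G → HasCompactSupport G →
      Tendsto (fun n => 𝔼 i, G (u n i)) atTop (𝓝 (G 0))) :
    Tendsto (fun n => 𝔼 i, u n i ^ 2) atTop (𝓝 0) := by
  rw [← tendsto_ofReal_iff]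
  convert tendsto_expect_of_tendsto_expect_hasCompactSupport hu hz
    (f := fun x => (x : ℂ) ^ 2) (by fun_prop) using 2 <;> simp

end EmpiricalMeans

namespace Matrix

section Frobenius

variable {𝕜 m n : Type*} [RCLike 𝕜] [Fintype m] [Fintype n]

/-- A function rather than a norm instance, since `‖·‖` on matrices is the `L²` operator norm
here. -/
noncomputable def frobNorm (X : Matrix m n 𝕜) : ℝ :=
  ‖(WithLp.toLp 2 fun p : m × n => X p.1 p.2 : EuclideanSpace 𝕜 (m × n))‖

lemma frobNorm_nonneg (X : Matrix m n 𝕜) : 0 ≤ frobNorm X := norm_nonneg _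

lemma sq_frobNorm (X : Matrix m n 𝕜) : frobNorm X ^ 2 = ∑ i, ∑ j, ‖X i j‖ ^ 2 := by
  rw [frobNorm, EuclideanSpace.norm_sq_eq, Fintype.sum_prod_type]

lemma frobNorm_add_le (X Y : Matrix m n 𝕜) : frobNorm (X + Y) ≤ frobNorm X + frobNorm Y := by
  have h := norm_add_le (WithLp.toLp 2 fun p : m × n => X p.1 p.2 : EuclideanSpace 𝕜 (m × n))
    (WithLp.toLp 2 fun p => Y p.1 p.2)
  rwa [← WithLp.toLp_add] at h

lemma frobNorm_sub_comm (X Y : Matrix m n 𝕜) : frobNorm (X - Y) = frobNorm (Y - X) := by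
  rw [frobNorm, frobNorm, ← norm_neg]
  congr 1
  ext
  simp

lemma frobNorm_conjTranspose (X : Matrix m n 𝕜) : frobNorm Xᴴ = frobNorm X := by
  rw [← sq_eq_sq₀ (frobNorm_nonneg _) (frobNorm_nonneg _), sq_frobNorm, sq_frobNorm, sum_comm]
  simp

lemma frobNorm_mul_le_left {l : Type*} [Fintype l] [DecidableEq m] (M : Matrix l m 𝕜)
    (X : Matrix m n 𝕜) : frobNorm (M * X) ≤ ‖M‖ * frobNorm X := by
  rw [← sq_le_sq₀ (frobNorm_nonneg _) (mul_nonneg (norm_nonneg _) (frobNorm_nonneg _)), mul_pow,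
    sq_frobNorm, sq_frobNorm, sum_comm, sum_comm (γ := m), mul_sum]
  refine sum_le_sum fun j _ => ?_
  have h := pow_le_pow_left₀ (norm_nonneg _)
    (l2_opNorm_mulVec M (WithLp.toLp 2 fun i => X i j)) 2
  simpa [mul_pow, EuclideanSpace.norm_sq_eq, mulVec, dotProduct, mul_apply] using h

lemma frobNorm_mul_le_right {l : Type*} [Fintype l] [DecidableEq m] [DecidableEq n]
    (X : Matrix l m 𝕜) (M : Matrix m n 𝕜) : frobNorm (X * M) ≤ frobNorm X * ‖M‖ := by
  rw [← frobNorm_conjTranspose, conjTranspose_mul, ← frobNorm_conjTranspose X,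
    ← l2_opNorm_conjTranspose M, mul_comm]
  exact frobNorm_mul_le_left _ _

lemma norm_trace_le_sqrt_card_mul_frobNorm (X : Matrix n n 𝕜) :
    ‖X.trace‖ ≤ √(Fintype.card n) * frobNorm X := by
  have hdiag : (∑ i, ‖X i i‖) ^ 2 ≤ Fintype.card n * frobNorm X ^ 2 := by
    refine sq_sum_le_card_mul_sum_sq.trans (mul_le_mul_of_nonneg_left ?_ (Nat.cast_nonneg _))
    rw [sq_frobNorm]
    exact sum_le_sum fun i _ => single_le_sum (f := fun j => ‖X i j‖ ^ 2)
      (fun _ _ => sq_nonneg _) (mem_univ i)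
  refine (norm_sum_le _ _).trans ?_
  rw [← sq_le_sq₀ (by positivity) (mul_nonneg (Real.sqrt_nonneg _) (frobNorm_nonneg _)),
    mul_pow, Real.sq_sqrt (Nat.cast_nonneg _)]
  exact hdiag

lemma l2_opNorm_pow_le [DecidableEq n] (M : Matrix n n 𝕜) (k : ℕ) : ‖M ^ k‖ ≤ ‖M‖ ^ k := by
  cases isEmpty_or_nonempty n
  · simp [Subsingleton.elim (M ^ k) 0]
  · exact norm_pow_le M k

lemma frobNorm_pow_sub_pow_le [DecidableEq n] {P Q : Matrix n n 𝕜} {c : ℝ} (hP : ‖P‖ ≤ c)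
    (hQ : ‖Q‖ ≤ c) (k : ℕ) : frobNorm (Q ^ k - P ^ k) ≤ k * c ^ (k - 1) * frobNorm (Q - P) := by
  induction k with
  | zero => simp [frobNorm, ← Pi.zero_def]
  | succ k ih =>
    have hc : 0 ≤ c := (norm_nonneg P).trans hP
    have hQk : ‖Q ^ k‖ ≤ c ^ k :=
      (l2_opNorm_pow_le Q k).trans (pow_le_pow_left₀ (norm_nonneg _) hQ k)
    calc frobNorm (Q ^ (k + 1) - P ^ (k + 1))
        = frobNorm (Q ^ k * (Q - P) + (Q ^ k - P ^ k) * P) := by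
          rw [pow_succ, pow_succ, mul_sub, sub_mul, sub_add_sub_cancel]
      _ ≤ ‖Q ^ k‖ * frobNorm (Q - P) + frobNorm (Q ^ k - P ^ k) * ‖P‖ :=
          (frobNorm_add_le _ _).trans
            (add_le_add (frobNorm_mul_le_left _ _) (frobNorm_mul_le_right _ _))
      _ ≤ c ^ k * frobNorm (Q - P) + k * c ^ (k - 1) * frobNorm (Q - P) * c := by
          gcongr
          · exact frobNorm_nonneg _
          · exact mul_nonneg (by positivity) (frobNorm_nonneg _)
      _ = (k + 1 : ℕ) * c ^ (k + 1 - 1) * frobNorm (Q - P) := by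
          rcases k with _ | k
          · simp
          · simp [pow_succ]; ring

lemma frobNorm_conjTranspose_mul_self_sub_le [DecidableEq m] [DecidableEq n]
    (X Y : Matrix m n 𝕜) : frobNorm (Yᴴ * Y - Xᴴ * X) ≤ (‖Y‖ + ‖X‖) * frobNorm (Y - X) :=
  calc frobNorm (Yᴴ * Y - Xᴴ * X) = frobNorm (Yᴴ * (Y - X) + (Y - X)ᴴ * X) := by
        rw [conjTranspose_sub, Matrix.mul_sub, Matrix.sub_mul, sub_add_sub_cancel]
    _ ≤ ‖Yᴴ‖ * frobNorm (Y - X) + frobNorm (Y - X)ᴴ * ‖X‖ :=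
        (frobNorm_add_le _ _).trans
          (add_le_add (frobNorm_mul_le_left _ _) (frobNorm_mul_le_right _ _))
    _ = (‖Y‖ + ‖X‖) * frobNorm (Y - X) := by
        rw [l2_opNorm_conjTranspose, frobNorm_conjTranspose]; ring

end Frobenius

section Hermitian

variable {𝕜 n : Type*} [RCLike 𝕜] [Fintype n] [DecidableEq n] {M : Matrix n n 𝕜}

lemma IsHermitian.l2_opNorm_eq (hM : M.IsHermitian) : ‖M‖ = ‖hM.eigenvalues‖ := by
  conv_lhs => rw [hM.spectral_theorem]
  rw [Unitary.conjStarAlgAut_apply, ← Unitary.coe_star, CStarRing.norm_mul_coe_unitary,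
    CStarRing.norm_coe_unitary_mul, l2_opNorm_diagonal]
  exact ((algebraMap_isometry ℝ 𝕜).postcomp_pi).norm_map_of_map_zero (by ext; simp) _

lemma IsHermitian.trace_pow (hM : M.IsHermitian) (k : ℕ) :
    (M ^ k).trace = ∑ i, (hM.eigenvalues i : 𝕜) ^ k := by
  conv_lhs => rw [hM.spectral_theorem, ← map_pow, Unitary.conjStarAlgAut_apply, trace_mul_cycle,
    Unitary.coe_star_mul_self, one_mul, diagonal_pow, trace_diagonal]
  simp

lemma abs_sum_eigenvalues_pow_sub_le {P Q : Matrix n n 𝕜} (hP : P.IsHermitian)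
    (hQ : Q.IsHermitian) {c : ℝ} (hPc : ‖P‖ ≤ c) (hQc : ‖Q‖ ≤ c) (k : ℕ) :
    |∑ i, hQ.eigenvalues i ^ k - ∑ i, hP.eigenvalues i ^ k|
      ≤ √(Fintype.card n) * (k * c ^ (k - 1) * frobNorm (Q - P)) := by
  have htrace : ((∑ i, hQ.eigenvalues i ^ k - ∑ i, hP.eigenvalues i ^ k : ℝ) : 𝕜)
      = (Q ^ k - P ^ k).trace := by
    push_cast
    rw [trace_sub, hQ.trace_pow, hP.trace_pow]
  rw [← RCLike.norm_ofReal (K := 𝕜), htrace]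
  exact (norm_trace_le_sqrt_card_mul_frobNorm _).trans
    (mul_le_mul_of_nonneg_left (frobNorm_pow_sub_pow_le hPc hQc k) (Real.sqrt_nonneg _))

lemma eigenvalues_conjTranspose_mul_self_le {m : Type*} [Fintype m] (X : Matrix m n 𝕜) (i : n) :
    (isHermitian_conjTranspose_mul_self X).eigenvalues i ≤ ‖X‖ ^ 2 := by
  rw [sq, ← l2_opNorm_conjTranspose_mul_self, (isHermitian_conjTranspose_mul_self X).l2_opNorm_eq]
  exact (le_abs_self _).trans (norm_le_pi_norm (isHermitian_conjTranspose_mul_self X).eigenvalues i)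

lemma eigenvalues_conjTranspose_mul_self_mem_Icc {m : Type*} [Fintype m] {X : Matrix m n 𝕜}
    {c : ℝ} (hX : ‖X‖ ≤ c) (i : n) :
    (isHermitian_conjTranspose_mul_self X).eigenvalues i ∈ Set.Icc 0 (c ^ 2) :=
  ⟨eigenvalues_conjTranspose_mul_self_nonneg X i,
    (eigenvalues_conjTranspose_mul_self_le X i).trans (pow_le_pow_left₀ (norm_nonneg _) hX 2)⟩

end Hermitian

section SingularValues

variable {m n : Type*} [Fintype m] [Fintype n] [DecidableEq n]

lemma svals_nonneg (X : Matrix m n ℂ) (i : n) : 0 ≤ svals X i := Real.sqrt_nonneg _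

lemma sq_svals (X : Matrix m n ℂ) (i : n) :
    svals X i ^ 2 = (isHermitian_conjTranspose_mul_self X).eigenvalues i :=
  Real.sq_sqrt (eigenvalues_conjTranspose_mul_self_nonneg X i)

lemma svals_le_l2_opNorm (X : Matrix m n ℂ) (i : n) : svals X i ≤ ‖X‖ :=
  (Real.sqrt_le_left (norm_nonneg X)).2 (eigenvalues_conjTranspose_mul_self_le X i)

lemma l2_opNorm_le_specNorm (X : Matrix m n ℂ) : ‖X‖ ≤ specNorm X := by
  have hs : 0 ≤ specNorm X := Real.iSup_nonneg (svals_nonneg X)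
  rw [← sq_le_sq₀ (norm_nonneg X) hs, sq, ← l2_opNorm_conjTranspose_mul_self,
    (isHermitian_conjTranspose_mul_self X).l2_opNorm_eq]
  refine pi_norm_le_iff_of_nonneg (sq_nonneg _) |>.2 fun i => ?_
  rw [Real.norm_eq_abs, abs_of_nonneg (eigenvalues_conjTranspose_mul_self_nonneg X i), ← sq_svals]
  exact pow_le_pow_left₀ (svals_nonneg X i) (le_ciSup (Set.finite_range _).bddAbove i) 2

lemma sq_frobNorm_eq_sum_sq_svals (X : Matrix m n ℂ) : frobNorm X ^ 2 = ∑ j, svals X j ^ 2 := by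
  have hsvals : ((∑ j, svals X j ^ 2 : ℝ) : ℂ) = (Xᴴ * X).trace := by
    simp [sq_svals, (isHermitian_conjTranspose_mul_self X).trace_eq_sum_eigenvalues]
  have hentries : (Xᴴ * X).trace = ((∑ i, ∑ j, ‖X i j‖ ^ 2 : ℝ) : ℂ) := by
    rw [sum_comm]
    push_cast
    simp [trace, mul_apply, Complex.conj_mul']
  rw [sq_frobNorm]
  exact_mod_cast (hsvals.trans hentries).symm

lemma frobNorm_div_sqrt_card (X : Matrix m n ℂ) :
    frobNorm X / √(Fintype.card n) = √(𝔼 j, svals X j ^ 2) := by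
  rw [Fintype.expect_eq_sum_div_card, Real.sqrt_div' _ (Nat.cast_nonneg _),
    ← sq_frobNorm_eq_sum_sq_svals, Real.sqrt_sq (frobNorm_nonneg _)]

lemma abs_expect_eigenvalues_conjTranspose_mul_self_pow_sub_le {X Y : Matrix n n ℂ} {c : ℝ}
    (hX : ‖X‖ ≤ c) (hY : ‖Y‖ ≤ c) (k : ℕ) :
    |𝔼 i, (isHermitian_conjTranspose_mul_self Y).eigenvalues i ^ k
      - 𝔼 i, (isHermitian_conjTranspose_mul_self X).eigenvalues i ^ k|
      ≤ k * (c ^ 2) ^ (k - 1) * (2 * c) * √(𝔼 i, svals (X - Y) i ^ 2) := by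
  have hsq : ∀ Z : Matrix n n ℂ, ‖Z‖ ≤ c → ‖Zᴴ * Z‖ ≤ c ^ 2 := fun Z hZ => by
    rw [l2_opNorm_conjTranspose_mul_self, ← sq]
    exact pow_le_pow_left₀ (norm_nonneg _) hZ 2
  have hpow := abs_sum_eigenvalues_pow_sub_le (isHermitian_conjTranspose_mul_self X)
    (isHermitian_conjTranspose_mul_self Y) (hsq X hX) (hsq Y hY) k
  have hgram := frobNorm_conjTranspose_mul_self_sub_le X Y
  have hc : 0 ≤ c := (norm_nonneg X).trans hX
  set N : ℝ := (Fintype.card n : ℝ)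
  rw [Fintype.expect_eq_sum_div_card, Fintype.expect_eq_sum_div_card, ← sub_div, abs_div,
    Nat.abs_cast, ← frobNorm_div_sqrt_card, frobNorm_sub_comm]
  calc _ ≤ √N * (k * (c ^ 2) ^ (k - 1) * frobNorm (Yᴴ * Y - Xᴴ * X)) / N := by gcongr
    _ ≤ √N * (k * (c ^ 2) ^ (k - 1) * ((2 * c) * frobNorm (Y - X))) / N := by
        gcongr
        exact hgram.trans (mul_le_mul_of_nonneg_right (by linarith) (frobNorm_nonneg _))
    _ = k * (c ^ 2) ^ (k - 1) * (2 * c) * (frobNorm (Y - X) / √N) := by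
        rw [mul_div_right_comm, Real.sqrt_div_self']
        ring

end SingularValues

theorem tendsto_expect_eigenvalues_pow_sub {ι : ℕ → Type*} [∀ n, Fintype (ι n)]
    [∀ n, DecidableEq (ι n)] {A B : (n : ℕ) → Matrix (ι n) (ι n) ℂ} {c : ℝ}
    (hA : ∀ n, ‖A n‖ ≤ c) (hB : ∀ n, ‖B n‖ ≤ c)
    (hAB : Tendsto (fun n => 𝔼 i, svals (A n - B n) i ^ 2) atTop (𝓝 0)) (k : ℕ) :
    Tendsto (fun n => 𝔼 i, (isHermitian_conjTranspose_mul_self (B n)).eigenvalues i ^ k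
      - 𝔼 i, (isHermitian_conjTranspose_mul_self (A n)).eigenvalues i ^ k) atTop (𝓝 0) := by
  refine squeeze_zero_norm (fun n => (Real.norm_eq_abs _).trans_le
    (abs_expect_eigenvalues_conjTranspose_mul_self_pow_sub_le (hA n) (hB n) k)) ?_
  simpa using ((Real.continuous_sqrt.tendsto 0).comp hAB).const_mul _

end Matrix

lemma one_div_smul_sum_range_svalFun {p : ℕ} (X : Matrix (Fin p) (Fin p) ℂ) (G : ℝ → ℂ) :
    (1 / (p : ℝ)) • ∑ j ∈ range p, G (svalFun X j) = 𝔼 i, G (svals X i) := by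
  set e := Fin.revPerm.trans (Tuple.sort (svals X))
  have hsorted : ∀ i : Fin p, svalFun X i = svals X (e i) := fun i => dif_pos i.isLt
  rw [Fintype.expect_eq_sum_div_card, Fintype.card_fin, sum_range fun j => G (svalFun X j)]
  simp_rw [hsorted, e.sum_comp fun i => G (svals X i)]
  rw [Complex.real_smul, one_div, Complex.ofReal_inv, Complex.ofReal_natCast, inv_mul_eq_div]

theorem distribution_invariant_under_zero_distributed_perturbation_general
    (d : ℕ → ℕ) (r : ℕ)
    (Ω : Set ℝ)
    (F : ℝ → Matrix (Fin r) (Fin r) ℂ)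
    (A B : (n : ℕ) → Matrix (Fin (d n)) (Fin (d n)) ℂ)
    (hdist : ∀ G : ℝ → ℂ, Continuous G → HasCompactSupport G →
      Tendsto (fun n => (1 / (d n : ℝ)) •
          ∑ j ∈ Finset.range (d n), G (svalFun (A n) j))
        atTop (nhds ((1 / (volume Ω).toReal) •
          ∫ θ in Ω, (1 / (r : ℝ)) • ∑ i, G (svals (F θ) i)))) 
    (hzd : ∀ G : ℝ → ℂ, Continuous G → HasCompactSupport G →
      Tendsto (fun n => (1 / (d n : ℝ)) •
          ∑ j ∈ Finset.range (d n), G (svalFun (A n - B n) j))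
        atTop (nhds (G 0)))
    (hAb : ∃ C : ℝ, ∀ n, specNorm (A n) ≤ C)
    (hBb : ∃ C : ℝ, ∀ n, specNorm (B n) ≤ C) :
    ∀ G : ℝ → ℂ, Continuous G → HasCompactSupport G →
      Tendsto (fun n => (1 / (d n : ℝ)) •
          ∑ j ∈ Finset.range (d n), G (svalFun (B n) j))
        atTop (nhds ((1 / (volume Ω).toReal) •
          ∫ θ in Ω, (1 / (r : ℝ)) • ∑ i, G (svals (F θ) i))) := by
  intro G hG hGc
  obtain ⟨C₁, hA⟩ := hAb
  obtain ⟨C₂, hB⟩ := hBb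
  simp only [one_div_smul_sum_range_svalFun] at hdist hzd ⊢
  set c := max C₁ C₂
  have hAc : ∀ n, ‖A n‖ ≤ c := fun n =>
    (l2_opNorm_le_specNorm _).trans ((hA n).trans (le_max_left _ _))
  have hBc : ∀ n, ‖B n‖ ≤ c := fun n =>
    (l2_opNorm_le_specNorm _).trans ((hB n).trans (le_max_right _ _))
  have hsvals : ∀ n i, |svals (A n - B n) i| ≤ c + c := fun n i =>
    (abs_of_nonneg (svals_nonneg _ i)).trans_le
      ((svals_le_l2_opNorm _ i).trans (norm_sub_le_of_le (hAc n) (hBc n)))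
  have hmoments := tendsto_expect_eigenvalues_pow_sub hAc hBc
    (tendsto_expect_sq_of_tendsto_expect_hasCompactSupport hsvals hzd)
  have hdiff := tendsto_expect_sub_of_tendsto_moments
    (fun n => eigenvalues_conjTranspose_mul_self_mem_Icc (hBc n))
    (fun n => eigenvalues_conjTranspose_mul_self_mem_Icc (hAc n)) hmoments
    (G := fun t => G √t) (hG.comp Real.continuous_sqrt).continuousOn
  simpa [svals] using hdiff.add (hdist G hG hGc)

/-- if `{Aₙ}ₙ ∼_σ F` and `{Aₙ - Bₙ}ₙ` is zero-distributed with
uniformly bounded spectral norms, then `{Bₙ}ₙ ∼_σ F` as well. -/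
theorem distribution_invariant_under_zero_distributed_perturbation
    (d : ℕ → ℕ) (hd : Tendsto d atTop atTop) (r : ℕ) (hr : 0 < r)
    (Ω : Set ℝ) (hΩmeas : MeasurableSet Ω)
    (hΩpos : volume Ω ≠ 0) (hΩfin : volume Ω ≠ ⊤)
    (F : ℝ → Matrix (Fin r) (Fin r) ℂ)
    (hFmeas : ∀ i j, Measurable fun θ => F θ i j)
    (A B : (n : ℕ) → Matrix (Fin (d n)) (Fin (d n)) ℂ)
    (hdist : ∀ G : ℝ → ℂ, Continuous G → HasCompactSupport G →
      Tendsto (fun n => (1 / (d n : ℝ)) •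
          ∑ j ∈ Finset.range (d n), G (svalFun (A n) j))
        atTop (nhds ((1 / (volume Ω).toReal) •
          ∫ θ in Ω, (1 / (r : ℝ)) • ∑ i, G (svals (F θ) i)))) 
    (hzd : ∀ G : ℝ → ℂ, Continuous G → HasCompactSupport G →
      Tendsto (fun n => (1 / (d n : ℝ)) •
          ∑ j ∈ Finset.range (d n), G (svalFun (A n - B n) j))
        atTop (nhds (G 0)))
    (hAb : ∃ C : ℝ, ∀ n, specNorm (A n) ≤ C)
    (hBb : ∃ C : ℝ, ∀ n, specNorm (B n) ≤ C) :
    ∀ G : ℝ → ℂ, Continuous G → HasCompactSupport G →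
      Tendsto (fun n => (1 / (d n : ℝ)) •
          ∑ j ∈ Finset.range (d n), G (svalFun (B n) j))
        atTop (nhds ((1 / (volume Ω).toReal) •
          ∫ θ in Ω, (1 / (r : ℝ)) • ∑ i, G (svals (F θ) i))) :=
  distribution_invariant_under_zero_distributed_perturbation_general d r Ω F A B hdist hzd hAb hBb
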